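/- arXiv:1401.4005 — 5 statements merged into one kernel-verified Lean document; each statement's English description precedes it below -/
import Mathlib

section
/- Let (p_i)_{i∈ι} be a family of positive real numbers indexed by a countable set ι, summable with sum I := ∑_{i∈ι} p_i. Let W ≥ 0 and γ > 0 with W + γ·(I − p_i) > 0 for every i ∈ ι, and let τ > 0. Then the set { i ∈ ι : p_i / (W + γ·(I − p_i)) > τ } is finite and has at most ⌈1/(γτ)⌉ elements. (This is the deterministic fact that the coverage number at SINR threshold τ never exceeds ⌈1/(γτ)⌉, which makes the symmetric-sum expansions of the k-coverage probabilities finite sums.) -/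
open Finset

/-- the set of stations whose SINR `p_i/(W+γ(I-p_i))` exceeds `τ > 0` is finite,
with at most `⌈1/(γτ)⌉` elements. -/
theorem statement3 {ι : Type*} [Countable ι] (p : ι → ℝ) (hp : ∀ i, 0 < p i)
    (hsum : Summable p) (W γ τ : ℝ) (hW : 0 ≤ W) (hγ : 0 < γ) (hτ : 0 < τ)
    (hpos : ∀ i, 0 < W + γ * ((∑' j, p j) - p i)) :
    {i | τ < p i / (W + γ * ((∑' j, p j) - p i))}.Finite ∧
      (Nat.card {i | τ < p i / (W + γ * ((∑' j, p j) - p i))} : ℤ) ≤ ⌈1/(γ*τ)⌉ := by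
  set x := ∑' j, p j with hx
  set S := {i | τ < p i / (W + γ * (x - p i))} with hS
  set c := γ * τ * x / (1 + γ * τ) with hc
  have hgt : 0 < 1 + γ * τ := by positivity
  -- every member of S has p i > c
  have key : ∀ i ∈ S, c < p i := by
    intro i hi
    have hd := hpos i
    have h1 : τ * (W + γ * (x - p i)) < p i := by
      rw [Set.mem_setOf_eq, lt_div_iff₀ hd] at hi
      exact hi
    have h2 : γ * τ * x ≤ p i * (1 + γ * τ) := by nlinarith [mul_nonneg hτ.le hW]
    rw [hc, div_lt_iff₀ hgt]
    nlinarith [hp i]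
  by_cases hxpos : 0 < x
  · have hcpos : 0 < c := by positivity
    have hfin : S.Finite := by
      have h := hsum.tendsto_cofinite_zero (gt_mem_nhds hcpos)
      rw [Filter.mem_map, Filter.mem_cofinite] at h
      refine h.subset ?_
      intro i hi
      exact fun h => absurd h (not_lt.mpr (key i hi).le)
    refine ⟨hfin, ?_⟩
    have hcard : (Nat.card S : ℤ) = (hfin.toFinset.card : ℤ) := by
      exact_mod_cast Set.ncard_eq_toFinset_card S hfin
    rw [hcard]
    set n := hfin.toFinset.card with hn
    rcases Nat.eq_zero_or_pos n with h0 | h1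
    · rw [h0]
      exact_mod_cast Int.ceil_nonneg (by positivity : (0:ℝ) ≤ 1/(γ*τ))
    · have hne : hfin.toFinset.Nonempty := Finset.card_pos.mp h1
      have hsumlt : (n : ℝ) * c < ∑ i ∈ hfin.toFinset, p i := by
        calc (n : ℝ) * c = ∑ _i ∈ hfin.toFinset, c := by
              rw [Finset.sum_const, nsmul_eq_mul]
          _ < ∑ i ∈ hfin.toFinset, p i := by
              exact Finset.sum_lt_sum_of_nonempty hne
                (fun i hi => key i (hfin.mem_toFinset.mp hi))
      have hle : ∑ i ∈ hfin.toFinset, p i ≤ x :=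
        Summable.sum_le_tsum hfin.toFinset (fun i _ => (hp i).le) hsum
      have hnc : (n : ℝ) * c < x := lt_of_lt_of_le hsumlt hle
      -- n * γτ x / (1+γτ) < x  ⇒ n < 1/(γτ) + 1
      have hnc' : (n : ℝ) * (γ * τ * x) < x * (1 + γ * τ) := by
        rw [hc, ← mul_div_assoc] at hnc
        exact (div_lt_iff₀ hgt).mp hnc
      have hlt : ((n : ℝ) - 1) < 1 / (γ * τ) := by
        rw [lt_div_iff₀ (mul_pos hγ hτ)]
        nlinarith [hnc', hxpos]
      have : ((n : ℤ) - 1) < ⌈1/(γ*τ)⌉ := by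
        rw [Int.lt_ceil]
        push_cast
        exact hlt
      omega
  · -- x ≤ 0 : S is empty since p i ≤ x would fail; in fact no i exists with i ∈ S, and ι itself:
    have hempty : S = ∅ := by
      ext i
      simp only [Set.mem_setOf_eq, Set.mem_empty_iff_false, iff_false, not_lt]
      exfalso
      exact hxpos (lt_of_lt_of_le (hp i) (Summable.le_tsum hsum i fun j _ => (hp j).le))
    rw [hempty]
    refine ⟨Set.finite_empty, ?_⟩
    have h0 : Nat.card (∅ : Set ι) = 0 := by simp
    rw [h0]
    exact_mod_cast Int.ceil_nonneg (by positivity : (0:ℝ) ≤ 1/(γ*τ))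
end

section
/- (Schuette–Nesbitt formula.) Let B_1, …, B_m be events in a probability space, let N := ∑_{i=1}^m 𝟙_{B_i} be the number of these events that occur, and for 0 ≤ n ≤ m let S_n be the n-th symmetric sum (S_0 := 1). Then for arbitrary real coefficients c_0, c_1, …, c_m: ∑_{n=0}^{m} c_n · P(N = n) = ∑_{n=0}^{m} (Δ^n c)(0) · S_n, where Δ is the forward difference operator, (Δc)(k) = c_{k+1} − c_k, and Δ^n is its n-th iterate. -/
/-!
Newton's forward-difference formula gives, pointwise, `c N = ∑ₙ (Δⁿ c) 0 * N.choose n`, and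
`N.choose n` counts the `n`-sets `J` of events that all occur, i.e. it is
`∑_{|J| = n} 𝟙_{⋂_{i ∈ J} Bᵢ}`. Taking expectations turns the left side into `E[c N]`, and
`E[N.choose n] = Sₙ`.
-/

open MeasureTheory Finset
open scoped Classical

def forwardDiff (c : ℕ → ℝ) : ℕ → ℝ := fun k => c (k+1) - c k

theorem forwardDiff_eq_fwdDiff : forwardDiff = fwdDiff 1 := rfl

theorem sum_choose_mul_forwardDiff_iter (c : ℕ → ℝ) {k m : ℕ} (hk : k ≤ m) :
    ∑ n ∈ range (m + 1), (k.choose n : ℝ) * (forwardDiff^[n] c) 0 = c k := by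
  have newton := shift_eq_sum_fwdDiff_iter 1 c k 0
  simp only [zero_add, smul_eq_mul, mul_one, nsmul_eq_mul] at newton
  rw [newton, forwardDiff_eq_fwdDiff]
  refine (sum_subset (range_subset_range.2 (by omega)) fun n _ hn => ?_).symm
  rw [Nat.choose_eq_zero_of_lt (by simpa using hn), Nat.cast_zero, zero_mul]

section Events

variable {Ω ι : Type*} [Fintype ι]

theorem choose_card_filter_mem_eq_sum_indicator (B : ι → Set Ω) (n : ℕ) (ω : Ω) :
    ((univ.filter fun i => ω ∈ B i).card.choose n : ℝ) =
      ∑ J ∈ powersetCard n univ, (⋂ i ∈ J, B i).indicator 1 ω := by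
  set T := univ.filter fun i => ω ∈ B i
  have mem_iInter : ∀ J : Finset ι, ω ∈ ⋂ i ∈ J, B i ↔ J ⊆ T := fun J => by
    simp [T, Finset.subset_iff]
  have hsubsets : (powersetCard n univ).filter (· ⊆ T) = powersetCard n T := by
    ext J; simp only [mem_filter, mem_powersetCard, subset_univ, true_and]; tauto
  simp only [Set.indicator_apply, mem_iInter, Pi.one_apply]
  rw [sum_boole, hsubsets, card_powersetCard]

variable [MeasurableSpace Ω]

theorem integral_choose_card_filter_mem (μ : Measure Ω) [IsFiniteMeasure μ] {B : ι → Set Ω}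
    (hB : ∀ i, MeasurableSet (B i)) (n : ℕ) :
    ∫ ω, ((univ.filter fun i => ω ∈ B i).card.choose n : ℝ) ∂μ =
      ∑ J ∈ powersetCard n univ, μ.real (⋂ i ∈ J, B i) := by
  have hJ : ∀ J : Finset ι, MeasurableSet (⋂ i ∈ J, B i) := fun J =>
    J.measurableSet_biInter fun i _ => hB i
  simp_rw [choose_card_filter_mem_eq_sum_indicator]
  rw [integral_finsetSum _ fun J _ => (integrable_const 1).indicator (hJ J)]
  exact sum_congr rfl fun J _ => integral_indicator_one (hJ J)

theorem measurable_card_filter_mem {B : ι → Set Ω} (hB : ∀ i, MeasurableSet (B i)) :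
    Measurable fun ω => (univ.filter fun i => ω ∈ B i).card := by
  simp_rw [card_filter]
  exact measurable_sum _ fun i _ => measurable_const.ite (hB i) measurable_const

end Events

section Level

variable {Ω : Type*} {N : Ω → ℕ} {K : ℕ}

theorem apply_eq_sum_indicator_level (hK : ∀ ω, N ω < K) (f : ℕ → ℝ) (ω : Ω) :
    f (N ω) = ∑ n ∈ range K, {ω | N ω = n}.indicator (fun _ => f n) ω := by
  simp [Set.indicator_apply, hK ω]

variable [MeasurableSpace Ω] (μ : Measure Ω) [IsFiniteMeasure μ] (hN : Measurable N)
  (hK : ∀ ω, N ω < K) (f : ℕ → ℝ)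
include hN hK

theorem integrable_comp_of_lt : Integrable (fun ω => f (N ω)) μ := by
  simp_rw [apply_eq_sum_indicator_level hK f]
  exact integrable_finsetSum _ fun n _ =>
    (integrable_const (f n)).indicator (hN (measurableSet_singleton n))

theorem integral_comp_eq_sum_measureReal :
    ∫ ω, f (N ω) ∂μ = ∑ n ∈ range K, f n * μ.real {ω | N ω = n} := by
  have hlevel : ∀ n, MeasurableSet {ω | N ω = n} := fun n => hN (measurableSet_singleton n)
  simp_rw [apply_eq_sum_indicator_level hK f]
  rw [integral_finsetSum _ fun n _ => (integrable_const (f n)).indicator (hlevel n)]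
  refine sum_congr rfl fun n _ => ?_
  rw [integral_indicator_const _ (hlevel n), smul_eq_mul, mul_comm]

end Level

/-- Schuette–Nesbitt formula: for events `B_1,…,B_m`, coverage number
`N = ∑ 𝟙_{B_i}`, symmetric sums `S_n` and arbitrary real coefficients `c_0,…,c_m`:
`∑_{n=0}^m c_n P(N = n) = ∑_{n=0}^m (Δ^n c)(0) S_n`. -/
theorem statement7 {Ω : Type*} [MeasurableSpace Ω] (P : Measure Ω) [IsProbabilityMeasure P]
    (m : ℕ) (B : Fin m → Set Ω) (hB : ∀ i, MeasurableSet (B i))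
    (N : Ω → ℕ) (hN : ∀ ω, N ω = (Finset.univ.filter (fun i => ω ∈ B i)).card)
    (S : ℕ → ℝ) (hS0 : S 0 = 1)
    (hS : ∀ n, 1 ≤ n →
      S n = ∑ J ∈ Finset.powersetCard n (Finset.univ : Finset (Fin m)),
        (P (⋂ i ∈ J, B i)).toReal)
    (c : ℕ → ℝ) :
    ∑ n ∈ Finset.range (m+1), c n * (P {ω | N ω = n}).toReal =
      ∑ n ∈ Finset.range (m+1), (forwardDiff^[n] c) 0 * S n := by
  have hN_meas : Measurable N := by
    simpa only [← funext hN] using measurable_card_filter_mem hB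
  have hN_le : ∀ ω, N ω ≤ m :=
    fun ω => (hN ω).trans_le ((card_le_univ _).trans_eq (Fintype.card_fin m))
  have hN_lt : ∀ ω, N ω < m + 1 := fun ω => Nat.lt_succ_of_le (hN_le ω)
  have hS_eq : ∀ n, S n = ∫ ω, ((N ω).choose n : ℝ) ∂P := by
    rintro (_ | n)
    · simp [hS0]
    · rw [hS _ n.succ_pos]
      simp_rw [hN, integral_choose_card_filter_mem P hB, measureReal_def]
  calc ∑ n ∈ range (m + 1), c n * (P {ω | N ω = n}).toReal
      = ∫ ω, c (N ω) ∂P := (integral_comp_eq_sum_measureReal P hN_meas hN_lt c).symm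
    _ = ∫ ω, ∑ n ∈ range (m + 1), (forwardDiff^[n] c) 0 * ((N ω).choose n : ℝ) ∂P := by
        simp_rw [mul_comm ((forwardDiff^[_] c) 0), sum_choose_mul_forwardDiff_iter c (hN_le _)]
    _ = ∑ n ∈ range (m + 1), (forwardDiff^[n] c) 0 * S n := by
        rw [integral_finsetSum _ fun n _ => integrable_comp_of_lt P hN_meas hN_lt
          (fun k => (forwardDiff^[n] c) 0 * (k.choose n : ℝ))]
        simp_rw [integral_const_mul, hS_eq]
end

section
/- Let (Ω, P) be a probability space, let X be an almost surely positive random variable and T a real-valued random variable on Ω, and let β > 2, K > 0 be real constants with E[X^{2/β}] < ∞. Then for every s > 0 and every t ∈ ℝ: ∫_{ℝ²} P( (K·‖x‖)^β ≤ s·X and T ≤ t ) dx = (π · s^{2/β} / K²) · E[ X^{2/β} · 𝟙(T ≤ t) ], where the integral is taken with respect to Lebesgue measure on ℝ² and ‖x‖ is the Euclidean norm. (This is the intensity-measure computation underlying the marked propagation invariance lemma: the intensity measure of the marked propagation process {( (K|X_i|)^β/(P_iS_i), T_i )} driven by a planar Poisson process of density λ is Λ(s,t) = λπs^{2/β}K^{−2}·E[(PS)^{2/β}𝟙(T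 ≤ t)], which depends on the distribution of the propagation effects only through the moment E[(PS)^{2/β}·𝟙(T≤t)].) -/
open MeasureTheory Real

/-! By Tonelli, the integral over `x` of `P(ω ∈ slice)` equals the expectation of the area of
the `ω`-slice, which is the disc `‖x‖ ≤ (s X ω)^{1/β} / K` when `T ω ≤ t` and empty otherwise,
of area `π (s X ω)^{2/β} / K²`. -/

theorem setOf_mul_norm_rpow_le_eq_closedBall {E : Type*} [SeminormedAddCommGroup E]
    {β K a : ℝ} (hβ : 0 < β) (hK : 0 < K) (ha : 0 ≤ a) :
    {x : E | (K * ‖x‖) ^ β ≤ a} = Metric.closedBall 0 (a ^ β⁻¹ / K) := by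
  ext x
  rw [Set.mem_ofPred_eq, Metric.mem_closedBall, dist_zero_right,
    ← Real.le_rpow_inv_iff_of_pos (by positivity) ha hβ, le_div_iff₀ hK, mul_comm]

theorem volume_setOf_mul_norm_rpow_le {β K a : ℝ} (hβ : 0 < β) (hK : 0 < K) (ha : 0 ≤ a) :
    volume {x : EuclideanSpace ℝ (Fin 2) | (K * ‖x‖) ^ β ≤ a} =
      ENNReal.ofReal (π * a ^ (2 / β) / K ^ 2) := by
  rw [setOf_mul_norm_rpow_le_eq_closedBall hβ hK ha, EuclideanSpace.volume_closedBall_fin_two,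
    ← ENNReal.ofReal_pow (by positivity), ← ENNReal.ofReal_mul (by positivity), div_pow,
    ← Real.rpow_natCast, ← Real.rpow_mul ha]
  congr 1
  rw [Nat.cast_ofNat, inv_mul_eq_div]
  ring

theorem integral_toReal_measure_prodMk_left {α γ : Type*} [MeasurableSpace α]
    [MeasurableSpace γ] (μ : Measure α) (ν : Measure γ) [SFinite μ] [IsFiniteMeasure ν]
    {S : Set (α × γ)} (hS : MeasurableSet S) :
    ∫ x, (ν (Prod.mk x ⁻¹' S)).toReal ∂μ = (μ.prod ν S).toReal := by
  rw [Measure.prod_apply hS, integral_toReal (measurable_measure_prodMk_left hS).aemeasurable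
    (.of_forall fun _ => measure_lt_top _ _)]

theorem statement8_general {Ω : Type*} [MeasurableSpace Ω] (P : Measure Ω) [IsProbabilityMeasure P]
    (X T : Ω → ℝ) (hX : Measurable X) (hT : Measurable T)
    (hXpos : ∀ᵐ ω ∂P, 0 < X ω)
    (β K : ℝ) (hβ : 2 < β) (hK : 0 < K)
    (s t : ℝ) (hs : 0 < s) :
    (∫ x : EuclideanSpace ℝ (Fin 2),
        (P {ω | (K * ‖x‖) ^ β ≤ s * X ω ∧ T ω ≤ t}).toReal) =
      (π * s ^ (2/β) / K^2) * ∫ ω, X ω ^ (2/β) * (if T ω ≤ t then 1 else 0) ∂P := by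
  have hβ0 : 0 < β := by linarith
  set g : Ω → ℝ := fun ω => π * s ^ (2/β) / K^2 * (X ω ^ (2/β) * if T ω ≤ t then 1 else 0)
  set S : Set (EuclideanSpace ℝ (Fin 2) × Ω) := {p | (K * ‖p.1‖) ^ β ≤ s * X p.2 ∧ T p.2 ≤ t}
  have hS : MeasurableSet S := by
    refine (measurableSet_le (α := ℝ) ?_ ?_).inter
      (measurableSet_le (α := ℝ) ?_ measurable_const) <;> fun_prop
  have hslice : ∀ᵐ ω ∂P, volume ((·, ω) ⁻¹' S) = ENNReal.ofReal (g ω) := by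
    filter_upwards [hXpos] with ω hω
    by_cases hTt : T ω ≤ t
    · simp only [S, g, Set.preimage_ofPred_eq, hTt, and_true, if_true, mul_one]
      rw [volume_setOf_mul_norm_rpow_le hβ0 hK (by positivity), Real.mul_rpow hs.le hω.le]
      ring_nf
    · simp [S, g, hTt]
  have hg_nonneg : 0 ≤ᵐ[P] g := by
    filter_upwards [hXpos] with ω hω
    have hXpow := Real.rpow_nonneg hω.le (2/β)
    positivity
  have hg_meas : AEStronglyMeasurable g P := by
    refine (Measurable.const_mul ?_ _).aestronglyMeasurable
    exact (hX.pow_const _).mul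
      (Measurable.ite (measurableSet_le hT measurable_const) measurable_const measurable_const)
  calc _ = (volume.prod P S).toReal := integral_toReal_measure_prodMk_left volume P hS
    _ = (∫⁻ ω, ENNReal.ofReal (g ω) ∂P).toReal := by
      rw [Measure.prod_apply_symm hS, lintegral_congr_ae hslice]
    _ = ∫ ω, g ω ∂P := (integral_eq_lintegral_of_nonneg_ae hg_nonneg hg_meas).symm
    _ = _ := integral_const_mul _ _

/-- intensity computation of the marked propagation invariance lemma:
`∫_{ℝ²} P((K‖x‖)^β ≤ s·X and T ≤ t) dx = (π s^{2/β}/K²)·E[X^{2/β}·𝟙(T ≤ t)]`. -/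
theorem statement8 {Ω : Type*} [MeasurableSpace Ω] (P : Measure Ω) [IsProbabilityMeasure P]
    (X T : Ω → ℝ) (hX : Measurable X) (hT : Measurable T)
    (hXpos : ∀ᵐ ω ∂P, 0 < X ω)
    (β K : ℝ) (hβ : 2 < β) (hK : 0 < K)
    (hmom : Integrable (fun ω => X ω ^ (2/β)) P)
    (s t : ℝ) (hs : 0 < s) :
    (∫ x : EuclideanSpace ℝ (Fin 2),
        (P {ω | (K * ‖x‖) ^ β ≤ s * X ω ∧ T ω ≤ t}).toReal) =
      (π * s ^ (2/β) / K^2) * ∫ ω, X ω ^ (2/β) * (if T ω ≤ t then 1 else 0) ∂P :=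
  statement8_general P X T hX hT hXpos β K hβ hK s t hs
end

section
/- Let k ≥ 1 be an integer, let p_1, …, p_k be positive reals, let I ≥ ∑_{j=1}^k p_j, W ≥ 0, γ > 0 be reals with W + γ·(I − ∑_{j=1}^k p_j) > 0, and let τ > 0 with τ' := τ/(1+γτ). Set z'_i := p_i/(W + γ·I) for 1 ≤ i ≤ k. Then for every subset U ⊆ {1,…,k}: (∑_{i∈U} p_i) / ( W + γ·I − γ·∑_{j=1}^k p_j ) > τ if and only if ∑_{i∈U} z'_i + γ·τ'·∑_{j∈{1,…,k}∖U} z'_j > τ'. (This is the equivalence expressing the coverage event for the SINR under interference cancellation and signal combination in terms of the STINR values.) -/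
open Finset

/-! With `D = W + γI`, `S = ∑ p_j`, `A = ∑_{i∈U} p_i` and `τ' = τ/(1+γτ)`, one has
`1 - γτ' = 1/(1+γτ)`, so `A/D + γτ'(S - A)/D - τ' = (A - τ(D - γS)) / ((1+γτ)D)`.
Both coverage conditions therefore say `A > τ(D - γS)`. -/

lemma sinr_threshold_sub_eq (a s D γ τ : ℝ) (hD : D ≠ 0) (hγτ : 1 + γ * τ ≠ 0) :
    a / D + γ * (τ / (1 + γ * τ)) * ((s - a) / D) - τ / (1 + γ * τ) =
      (a - τ * (D - γ * s)) / ((1 + γ * τ) * D) := by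
  field_simp
  ring

lemma lt_div_sub_mul_iff (a s D γ τ : ℝ) (hD : 0 < D) (hd : 0 < D - γ * s)
    (hγτ : 0 < 1 + γ * τ) :
    τ < a / (D - γ * s) ↔
      τ / (1 + γ * τ) < a / D + γ * (τ / (1 + γ * τ)) * ((s - a) / D) := by
  rw [lt_div_iff₀ hd, ← sub_pos, ← sub_pos (b := τ / (1 + γ * τ)),
    sinr_threshold_sub_eq a s D γ τ hD.ne' hγτ.ne', div_pos_iff_of_pos_right (by positivity)]

theorem statement9_general (k : ℕ) (p : Fin k → ℝ) (hp : ∀ i, 0 < p i)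
    (I W γ τ : ℝ) (hγ : 0 < γ)
    (hpos : 0 < W + γ * (I - ∑ j, p j)) (hτ : 0 < τ)
    (U : Finset (Fin k)) :
    τ < (∑ i ∈ U, p i) / (W + γ * I - γ * ∑ j, p j) ↔
      τ/(1+γ*τ) < (∑ i ∈ U, p i / (W + γ * I)) +
        γ * (τ/(1+γ*τ)) * ∑ j ∈ Uᶜ, p j / (W + γ * I) := by
  have hS : 0 ≤ ∑ j, p j := sum_nonneg fun j _ => (hp j).le
  have hd : 0 < W + γ * I - γ * ∑ j, p j := by linarith
  have hD : 0 < W + γ * I := by nlinarith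
  have hcompl : ∑ j ∈ Uᶜ, p j = ∑ j, p j - ∑ i ∈ U, p i := by
    rw [← sum_compl_add_sum U p, add_sub_cancel_right]
  rw [← sum_div, ← sum_div, hcompl]
  exact lt_div_sub_mul_iff _ _ _ γ τ hD hd (by positivity)

/-- the coverage event for the SINR under interference cancellation and signal
combination (combining set `U`, cancelling the other signals among the `k` strongest) is
equivalent to `∑_{i∈U} z'_i + γτ'·∑_{j∉U} z'_j > τ'` in terms of the STINR values
`z'_i = p_i/(W+γI)` and `τ' = τ/(1+γτ)`. -/
theorem statement9 (k : ℕ) (hk : 1 ≤ k) (p : Fin k → ℝ) (hp : ∀ i, 0 < p i)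
    (I W γ τ : ℝ) (hI : ∑ j, p j ≤ I) (hW : 0 ≤ W) (hγ : 0 < γ)
    (hpos : 0 < W + γ * (I - ∑ j, p j)) (hτ : 0 < τ)
    (U : Finset (Fin k)) :
    τ < (∑ i ∈ U, p i) / (W + γ * I - γ * ∑ j, p j) ↔
      τ/(1+γ*τ) < (∑ i ∈ U, p i / (W + γ * I)) +
        γ * (τ/(1+γ*τ)) * ∑ j ∈ Uᶜ, p j / (W + γ * I) :=
  statement9_general k p hp I W γ τ hγ hpos hτ U
end

section
/- Let β > 2, let k ≥ 1 be an integer, let γ > 0 and τ > 0 be reals with γ·τ ≥ 1, and set τ' := τ/(1+γτ). Then ∫_{R} c_{k,2/β,0} · γ^k · (∏_{i=1}^k (γ·z_i)^{−(2/β+1)}) · (1 − γ·∑_{j=1}^k z_j)^{2k/β − 1} dz_1 ⋯ dz_k = 1 / ( (γτ)^{2k/β} · Γ(1 + 2k/β) · Γ(1 − 2/β)^k ), where R := { (z_1,…,z_k) ∈ ℝ^k : z_1 > z_2 > ⋯ > z_k > 0, γ·∑_{j=1}^k z_j < 1, and γ·τ'·∑_{i=1}^{k−1} z_i + z_k > τ'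 }. (This is the noiseless case of the closed-form probability that the k-th strongest signal, after cancellation of the k−1 stronger signals from the interference, is received with SINR above τ, obtained by integrating the k-th factorial moment density of the STINR process over the coverage region; when γτ ≥ 1 only the leading term of the order-statistics expansion survives.) -/
/-!
The substitution `z = y / (γ (1 + ∑ y))`, with inverse `y = γ z / (1 - γ ∑ z)`, maps the cone
`y₀ > ⋯ > y_{k-1} > γτ` bijectively onto the region of integration, and its Jacobian
`(γ (1 + ∑ y))^{-k} (1 + ∑ y)^{-1}` cancels the factors `γ^k` and `(1 - γ ∑ z)^{2k/β - 1}` of the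
density. What remains is `c_{k,2/β,0} ∫ ∏ y_i^{-(2/β+1)}` over the cone; integrating out the largest
coordinate one at a time gives `(γτ)^{-2k/β} / ((2/β)^k k!)`, and `Γ(1 + 2k/β) = (2k/β) Γ(2k/β)`
turns the product with `c_{k,2/β,0}` into the closed form.
-/

open MeasureTheory Real Finset

/-- The constant `c_{k,2/β,0} = (2/β)^{k-1}·(k-1)!/(Γ(2k/β)·Γ(1-2/β)^k)`. -/
noncomputable def cConst (k : ℕ) (β : ℝ) : ℝ :=
  (2/β)^(k-1) * (Nat.factorial (k-1)) /
    (Real.Gamma (2*(k:ℝ)/β) * (Real.Gamma (1 - 2/β))^k)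

open scoped Nat

def orderedAbove (n : ℕ) (a : ℝ) : Set (Fin (n + 1) → ℝ) :=
  {y | StrictAnti y ∧ a < y (Fin.last n)}

lemma measurableSet_orderedAbove (n : ℕ) (a : ℝ) : MeasurableSet (orderedAbove n a) := by
  have : orderedAbove n a =
      (⋂ i : Fin n, {y | y i.succ < y i.castSucc}) ∩ {y | a < y (Fin.last n)} := by
    ext y
    simp [orderedAbove, Fin.strictAnti_iff_succ_lt]
  rw [this]
  exact (MeasurableSet.iInter fun i => measurableSet_lt (by fun_prop) (by fun_prop)).inter
    (measurableSet_lt (by fun_prop) (by fun_prop))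

lemma lt_of_mem_orderedAbove {n : ℕ} {a : ℝ} {y : Fin (n + 1) → ℝ} (hy : y ∈ orderedAbove n a)
    (i : Fin (n + 1)) : a < y i :=
  hy.2.trans_le (hy.1.antitone (Fin.le_last i))

lemma cons_mem_orderedAbove_iff {n : ℕ} {a x : ℝ} {t : Fin (n + 1) → ℝ} :
    Fin.cons x t ∈ orderedAbove (n + 1) a ↔ t ∈ orderedAbove n a ∧ t 0 < x := by
  simp only [orderedAbove, ← Fin.succ_last]
  exact ⟨fun ⟨h, ha⟩ => ⟨⟨(strictAnti_vecCons.1 h).2, ha⟩, (strictAnti_vecCons.1 h).1⟩,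
    fun ⟨⟨h, ha⟩, hx⟩ => ⟨strictAnti_vecCons.2 ⟨hx, h⟩, ha⟩⟩

lemma lintegral_eq_lintegral_lintegral_cons {n : ℕ} {g : (Fin (n + 1) → ℝ) → ENNReal}
    (hg : Measurable g) : ∫⁻ y, g y = ∫⁻ t, ∫⁻ x, g (Fin.cons x t) := by
  set e := MeasurableEquiv.piFinSuccAbove (fun _ : Fin (n + 1) => ℝ) 0
  rw [← (volume_preserving_piFinSuccAbove (fun _ : Fin (n + 1) => ℝ) 0).symm.lintegral_comp hg,
    Measure.volume_eq_prod,
    lintegral_prod_symm' (fun p => g (e.symm p)) (hg.comp e.symm.measurable)]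
  simp only [e, MeasurableEquiv.piFinSuccAbove_symm_apply, Fin.insertNthEquiv_zero]
  rfl

lemma setLIntegral_orderedAbove_zero (a : ℝ) (g : (Fin 1 → ℝ) → ENNReal) :
    ∫⁻ y in orderedAbove 0 a, g y = ∫⁻ x in Set.Ioi a, g (fun _ => x) := by
  have he := (volume_preserving_funUnique (Fin 1) ℝ).symm
  erw [← he.setLIntegral_comp_preimage_emb (MeasurableEquiv.measurableEmbedding _)]
  congr 2
  ext x
  simp [orderedAbove, Subsingleton.strictAnti]

lemma setLIntegral_orderedAbove_succ (n : ℕ) (a : ℝ) {g : (Fin (n + 2) → ℝ) → ENNReal}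
    (hg : Measurable g) :
    ∫⁻ y in orderedAbove (n + 1) a, g y =
      ∫⁻ t in orderedAbove n a, ∫⁻ x in Set.Ioi (t 0), g (Fin.cons x t) := by
  rw [← lintegral_indicator (measurableSet_orderedAbove _ _),
    lintegral_eq_lintegral_lintegral_cons (hg.indicator (measurableSet_orderedAbove _ _)),
    ← lintegral_indicator (measurableSet_orderedAbove _ _)]
  congr 1
  ext t
  by_cases ht : t ∈ orderedAbove n a
  · rw [Set.indicator_of_mem ht, ← lintegral_indicator measurableSet_Ioi]
    congr 1
    ext x
    simp [Set.indicator, cons_mem_orderedAbove_iff, ht]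
  · simp [Set.indicator, cons_mem_orderedAbove_iff, ht]

lemma lintegral_Ioi_rpow_neg {c w : ℝ} (hc : 0 < c) (hw : 0 < w) :
    ∫⁻ x in Set.Ioi c, ENNReal.ofReal (x ^ (-(w + 1))) = ENNReal.ofReal (c ^ (-w) / w) := by
  rw [← ofReal_integral_eq_lintegral_ofReal (integrableOn_Ioi_rpow_of_lt (by linarith) hc),
    integral_Ioi_rpow_of_lt (by linarith) hc, show -(w + 1) + 1 = -w by ring, neg_div_neg_eq]
  filter_upwards [ae_restrict_mem measurableSet_Ioi] with x hx
  exact rpow_nonneg (hc.trans hx).le _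

lemma setLIntegral_orderedAbove_rpow {u : ℝ} (hu : 0 < u) (n : ℕ) {v a : ℝ} (hv : 0 < v)
    (ha : 0 < a) :
    ∫⁻ y in orderedAbove n a,
        ENNReal.ofReal (y 0 ^ (-(v + 1)) * ∏ i : Fin n, y i.succ ^ (-(u + 1))) =
      ENNReal.ofReal (a ^ (-(v + n * u)) / ∏ j ∈ range (n + 1), (v + j * u)) := by
  induction n generalizing v with
  | zero =>
    rw [setLIntegral_orderedAbove_zero]
    simpa using lintegral_Ioi_rpow_neg ha hv
  | succ n ih =>
    -- integrating out `x ∈ (t 0, ∞)` turns `x ^ (-(v + 1))` into `t 0 ^ (-v) / v`,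
    -- so the weight of the new top coordinate `t 0` has exponent `-(v + u + 1)`
    rw [setLIntegral_orderedAbove_succ n a (by fun_prop)]
    calc _ = ∫⁻ t in orderedAbove n a, ENNReal.ofReal v⁻¹ *
          ENNReal.ofReal (t 0 ^ (-(v + u + 1)) * ∏ i : Fin n, t i.succ ^ (-(u + 1))) := by
          refine setLIntegral_congr_fun (measurableSet_orderedAbove n a) fun t ht => ?_
          have ht0 : 0 < t 0 := ha.trans (lt_of_mem_orderedAbove ht 0)
          have hP : 0 ≤ ∏ i, t i ^ (-(u + 1)) :=
            prod_nonneg fun i _ => rpow_nonneg (ha.trans (lt_of_mem_orderedAbove ht i)).le _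
          simp only [Fin.cons_zero, Fin.cons_succ, ENNReal.ofReal_mul' hP]
          rw [lintegral_mul_const _ (by fun_prop), lintegral_Ioi_rpow_neg ht0 hv,
            ← ENNReal.ofReal_mul (by positivity), ← ENNReal.ofReal_mul (by positivity),
            Fin.prod_univ_succ, show -(v + u + 1) = -v + -(u + 1) by ring, rpow_add ht0]
          ring_nf
      _ = ENNReal.ofReal v⁻¹ * ∫⁻ t in orderedAbove n a,
          ENNReal.ofReal (t 0 ^ (-(v + u + 1)) * ∏ i : Fin n, t i.succ ^ (-(u + 1))) :=
          lintegral_const_mul _ (by fun_prop)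
      _ = _ := by
          rw [ih (by positivity), ← ENNReal.ofReal_mul (by positivity), prod_range_succ' _ (n + 1)]
          congr 1
          push_cast
          rw [show -(v + u + n * u) = -(v + (n + 1) * u) by ring,
            prod_congr rfl fun (j : ℕ) _ => show v + u + j * u = v + (j + 1) * u by ring]
          ring

lemma prod_range_add_mul_self (u : ℝ) (n : ℕ) :
    ∏ j ∈ range n, (u + j * u) = u ^ n * n ! := by
  rw [prod_congr rfl fun (j : ℕ) _ => show u + j * u = u * (j + 1) by ring, prod_mul_distrib,
    prod_const, card_range, ← prod_range_add_one_eq_factorial]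
  push_cast
  rfl

lemma setIntegral_orderedAbove_prod_rpow {u a : ℝ} (hu : 0 < u) (ha : 0 < a) (n : ℕ) :
    ∫ y in orderedAbove n a, ∏ i, y i ^ (-(u + 1)) =
      a ^ (-((n + 1) * u)) / (u ^ (n + 1) * (n + 1)!) := by
  have hnonneg : 0 ≤ᵐ[volume.restrict (orderedAbove n a)] fun y => ∏ i, y i ^ (-(u + 1)) := by
    filter_upwards [ae_restrict_mem (measurableSet_orderedAbove n a)] with y hy
    exact prod_nonneg fun i _ => rpow_nonneg (ha.trans (lt_of_mem_orderedAbove hy i)).le _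
  have hmeas : Measurable fun y : Fin (n + 1) → ℝ => ∏ i, y i ^ (-(u + 1)) := by fun_prop
  rw [integral_eq_lintegral_of_nonneg_ae hnonneg hmeas.aestronglyMeasurable]
  simp_rw [Fin.prod_univ_succ]
  rw [setLIntegral_orderedAbove_rpow hu n hu ha, prod_range_add_mul_self,
    ENNReal.toReal_ofReal (by positivity), show -(u + n * u) = -((n + 1) * u) by ring]

lemma ContinuousLinearMap.det_id_add_smulRight {R ι : Type*} [CommRing R] [TopologicalSpace R]
    [IsTopologicalRing R] [Fintype ι] [DecidableEq ι] (f : (ι → R) →L[R] R) (v : ι → R) :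
    (ContinuousLinearMap.id R (ι → R) + f.smulRight v).det = 1 + f v := by
  set A := ContinuousLinearMap.id R (ι → R) + f.smulRight v
  have hA : LinearMap.toMatrix' (A : (ι → R) →ₗ[R] (ι → R)) =
      1 + Matrix.replicateCol Unit v * Matrix.replicateRow Unit fun j => f (Pi.single j 1) := by
    ext i j
    simp [A, LinearMap.toMatrix'_apply, Matrix.one_apply, Pi.single_apply, Matrix.mul_apply,
      mul_comm]
  rw [ContinuousLinearMap.det, ← LinearMap.det_toMatrix', hA,
    Matrix.det_one_add_replicateCol_mul_replicateRow]
  conv_rhs => rw [← Finset.univ_sum_single v]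
  simp only [dotProduct, map_sum]
  congr 1
  refine Finset.sum_congr rfl fun i _ => ?_
  rw [show Pi.single i (v i) = v i • Pi.single i (1 : R) by
      rw [← Pi.single_smul', smul_eq_mul, mul_one],
    map_smul, smul_eq_mul, mul_comm]

noncomputable section

variable {ι : Type*} [Fintype ι]

def projMap (γ : ℝ) (y : ι → ℝ) : ι → ℝ := (γ * (1 + ∑ j, y j))⁻¹ • y

def projMapInv (γ : ℝ) (z : ι → ℝ) : ι → ℝ := (γ / (1 - γ * ∑ j, z j)) • z

def projMapFDeriv (γ : ℝ) (y : ι → ℝ) : (ι → ℝ) →L[ℝ] (ι → ℝ) :=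
  (γ * (1 + ∑ j, y j))⁻¹ • ContinuousLinearMap.id ℝ (ι → ℝ) +
    ((-((γ * (1 + ∑ j, y j)) ^ 2)⁻¹) • γ • ∑ j, ContinuousLinearMap.proj j).smulRight y

lemma hasFDerivAt_projMap {γ : ℝ} {y : ι → ℝ} (h : γ * (1 + ∑ j, y j) ≠ 0) :
    HasFDerivAt (projMap γ) (projMapFDeriv γ y) y := by
  have hsum : HasFDerivAt (fun y : ι → ℝ => γ * (1 + ∑ j, y j))
      (γ • (∑ j, ContinuousLinearMap.proj j : (ι → ℝ) →L[ℝ] ℝ)) y := by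
    exact ((HasFDerivAt.fun_sum fun j _ => hasFDerivAt_apply j y).const_add 1).const_mul γ
  exact ((hasDerivAt_inv h).comp_hasFDerivAt y hsum).smul (hasFDerivAt_id y)

lemma sum_projMap (γ : ℝ) (y : ι → ℝ) :
    ∑ j, projMap γ y j = (γ * (1 + ∑ j, y j))⁻¹ * ∑ j, y j := by
  simp [projMap, mul_sum]

lemma one_sub_mul_sum_projMap {γ : ℝ} (hγ : γ ≠ 0) {y : ι → ℝ} (h : 1 + ∑ j, y j ≠ 0) :
    1 - γ * ∑ j, projMap γ y j = (1 + ∑ j, y j)⁻¹ := by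
  rw [sum_projMap]
  field_simp
  ring

lemma det_projMapFDeriv {γ : ℝ} (hγ : γ ≠ 0) {y : ι → ℝ} (h : 1 + ∑ j, y j ≠ 0) :
    (projMapFDeriv γ y).det =
      (γ * (1 + ∑ j, y j))⁻¹ ^ Fintype.card ι * (1 + ∑ j, y j)⁻¹ := by
  classical
  set c := (γ * (1 + ∑ j, y j))⁻¹
  have hfactor : projMapFDeriv γ y = c • (ContinuousLinearMap.id ℝ (ι → ℝ) +
      ((-(γ * c)) • ∑ j, ContinuousLinearMap.proj j).smulRight y) := by
    ext x i
    simp only [projMapFDeriv, c, mul_inv_rev, add_apply, smul_apply,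
      ContinuousLinearMap.id_apply, ContinuousLinearMap.smulRight_apply, _root_.sum_apply,
      ContinuousLinearMap.proj_apply, smul_eq_mul, neg_mul, neg_smul, Pi.add_apply, Pi.smul_apply,
      Pi.neg_apply, smul_add, smul_neg, add_right_inj, neg_inj]
    field_simp
  rw [hfactor, ContinuousLinearMap.det, ContinuousLinearMap.toLinearMap_smul, LinearMap.det_smul,
    Module.finrank_fintype_fun_eq_card, ← ContinuousLinearMap.det,
    ContinuousLinearMap.det_id_add_smulRight]
  congr 1
  simp only [c, mul_inv_rev, smul_apply, _root_.sum_apply, ContinuousLinearMap.proj_apply,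
    smul_eq_mul, neg_mul]
  field_simp
  ring

lemma projMapInv_projMap {γ : ℝ} (hγ : γ ≠ 0) {y : ι → ℝ} (h : 1 + ∑ j, y j ≠ 0) :
    projMapInv γ (projMap γ y) = y := by
  rw [projMapInv, one_sub_mul_sum_projMap hγ h, projMap, smul_smul]
  field_simp
  exact one_smul ℝ y

lemma projMap_projMapInv {γ : ℝ} (hγ : γ ≠ 0) {z : ι → ℝ} (h : γ * ∑ j, z j ≠ 1) :
    projMap γ (projMapInv γ z) = z := by
  have hD : 1 - γ * ∑ j, z j ≠ 0 := sub_ne_zero.2 (Ne.symm h)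
  simp only [projMap, projMapInv, Pi.smul_apply, smul_eq_mul, ← mul_sum, smul_smul]
  field_simp
  rw [show 1 - γ * ∑ j, z j + γ * ∑ j, z j = 1 by ring, div_one, one_smul]

lemma mem_image_projMap_iff {γ : ℝ} (hγ : 0 < γ) {s : Set (ι → ℝ)}
    (hs : ∀ y ∈ s, 0 ≤ ∑ j, y j) {z : ι → ℝ} :
    z ∈ projMap γ '' s ↔ γ * ∑ j, z j < 1 ∧ projMapInv γ z ∈ s := by
  constructor
  · rintro ⟨y, hy, rfl⟩
    have hP : 0 < 1 + ∑ j, y j := by linarith [hs y hy]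
    refine ⟨?_, by rwa [projMapInv_projMap hγ.ne' hP.ne']⟩
    rw [sum_projMap, show γ * ((γ * (1 + ∑ j, y j))⁻¹ * ∑ j, y j) =
      (∑ j, y j) / (1 + ∑ j, y j) by field_simp, div_lt_one hP]
    linarith
  · rintro ⟨hz, hmem⟩
    exact ⟨projMapInv γ z, hmem, projMap_projMapInv hγ.ne' hz.ne⟩

lemma abs_det_projMapFDeriv_mul {γ : ℝ} (hγ : 0 < γ) {y : ι → ℝ} (hy : ∀ i, 0 ≤ y i)
    (C u : ℝ) :
    |(projMapFDeriv γ y).det| * (C * γ ^ Fintype.card ι *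
        (∏ i, (γ * projMap γ y i) ^ (-(u + 1))) *
        (1 - γ * ∑ j, projMap γ y j) ^ (Fintype.card ι * u - 1)) =
      C * ∏ i, y i ^ (-(u + 1)) := by
  set d := Fintype.card ι
  set P := 1 + ∑ j, y j
  have hP : 0 < P := by linarith [sum_nonneg fun j (_ : j ∈ univ) => hy j]
  have hfactor (i : ι) : (γ * projMap γ y i) ^ (-(u + 1)) = y i ^ (-(u + 1)) * (P ^ u * P) := by
    rw [show γ * projMap γ y i = y i * P⁻¹ by
      simp only [projMap, P, Pi.smul_apply, smul_eq_mul]; field_simp,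
      mul_rpow (hy i) (inv_nonneg.2 hP.le), inv_rpow hP.le, ← rpow_neg hP.le, neg_neg,
      rpow_add_one hP.ne']
  have hpow : P⁻¹ ^ (d * u - 1) = P / (P ^ u) ^ d := by
    rw [inv_rpow hP.le, rpow_sub_one hP.ne', mul_comm, rpow_mul hP.le, rpow_natCast]
    field_simp
  rw [det_projMapFDeriv hγ.ne' hP.ne', one_sub_mul_sum_projMap hγ.ne' hP.ne', hpow,
    prod_congr rfl fun i _ => hfactor i, prod_mul_distrib, prod_const, card_univ,
    abs_of_pos (by positivity), show 1 + ∑ j, y j = P from rfl, show Fintype.card ι = d from rfl,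
    inv_pow, mul_pow, mul_pow (P ^ u)]
  field_simp

end

lemma coverage_iff_projMapInv_mem {n : ℕ} {γ τ : ℝ} (hγ : 0 < γ) (hτ : 0 < τ) (z : Fin (n + 1) → ℝ) :
    ((∀ i, 0 < z i) ∧ StrictAnti z ∧ γ * ∑ j, z j < 1 ∧
        τ / (1 + γ * τ) < γ * (τ / (1 + γ * τ)) * (∑ i ∈ univ.erase (Fin.last n), z i) +
          z (Fin.last n)) ↔
      γ * ∑ j, z j < 1 ∧ projMapInv γ z ∈ orderedAbove n (γ * τ) := by
  set S := ∑ j, z j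
  set L := z (Fin.last n)
  rw [sum_erase_eq_sub (mem_univ _)]
  refine ⟨fun ⟨hpos, hanti, hS, hlast⟩ => ⟨hS, ?_⟩, fun ⟨hS, hmem⟩ => ⟨?_, ?_, hS, ?_⟩⟩
  all_goals
    have hD : 0 < 1 - γ * S := by linarith
    have hc : 0 < γ / (1 - γ * S) := div_pos hγ hD
    -- both sides say `τ * (1 - γ * S) < L`
    have hlast_iff : τ / (1 + γ * τ) < γ * (τ / (1 + γ * τ)) * (S - L) + L ↔
        γ * τ < (γ / (1 - γ * S)) * L := by
      rw [← sub_pos, show γ * (τ / (1 + γ * τ)) * (S - L) + L - τ / (1 + γ * τ) =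
        (L - τ * (1 - γ * S)) / (1 + γ * τ) by field_simp; ring,
        div_pos_iff_of_pos_right (by positivity), div_mul_eq_mul_div, lt_div_iff₀ hD, sub_pos,
        mul_assoc, mul_lt_mul_iff_right₀ hγ]
  · exact ⟨fun i j hij => mul_lt_mul_of_pos_left (hanti hij) hc, hlast_iff.1 hlast⟩
  · exact fun i =>
      pos_of_mul_pos_right ((mul_pos hγ hτ).trans (lt_of_mem_orderedAbove hmem i)) hc.le
  · exact fun i j hij => lt_of_mul_lt_mul_left (hmem.1 hij) hc.le
  · exact hlast_iff.2 hmem.2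

lemma coverageRegion_eq_image {n : ℕ} {γ τ : ℝ} (hγ : 0 < γ) (hτ : 0 < τ) :
    {z : Fin (n + 1) → ℝ | (∀ i, 0 < z i) ∧ (∀ i j : Fin (n + 1), i < j → z j < z i) ∧
        γ * ∑ j, z j < 1 ∧
        τ / (1 + γ * τ) < γ * (τ / (1 + γ * τ)) * (∑ i ∈ univ.erase (Fin.last n), z i) +
          z (Fin.last n)} =
      projMap γ '' orderedAbove n (γ * τ) := by
  ext z
  rw [mem_image_projMap_iff hγ fun y hy =>
    sum_nonneg fun i _ => ((mul_pos hγ hτ).trans (lt_of_mem_orderedAbove hy i)).le]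
  exact coverage_iff_projMapInv_mem hγ hτ z

lemma cConst_succ_mul {β : ℝ} (hβ : 2 < β) (n : ℕ) {a : ℝ} (ha : 0 < a) :
    cConst (n + 1) β * (a ^ (-((n + 1) * (2 / β))) / ((2 / β) ^ (n + 1) * (n + 1)!)) =
      1 / (a ^ (2 * ((n + 1 : ℕ) : ℝ) / β) * Gamma (1 + 2 * ((n + 1 : ℕ) : ℝ) / β) *
        Gamma (1 - 2 / β) ^ (n + 1)) := by
  have hu : 0 < 2 / β := by positivity
  have hk : 2 * ((n + 1 : ℕ) : ℝ) / β = (n + 1) * (2 / β) := by push_cast; ring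
  have hku : 0 < (n + 1) * (2 / β) := by positivity
  have hG : 0 < Gamma (1 - 2 / β) :=
    Gamma_pos_of_pos (by rw [sub_pos, div_lt_one]; all_goals linarith)
  rw [cConst, Nat.add_sub_cancel, hk, add_comm 1, Gamma_add_one hku.ne', rpow_neg ha.le,
    Nat.factorial_succ]
  have := Gamma_pos_of_pos hku
  have := rpow_pos_of_pos ha ((n + 1) * (2 / β))
  push_cast
  generalize 2 / β = u at *
  field_simp
  ring

/-- for `γτ ≥ 1`, integrating the `k`-th factorial moment density of the
noiseless STINR process over the coverage region for the `k`-th strongest signal (with the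
`k-1` stronger signals cancelled) gives the closed form
`1/((γτ)^{2k/β}·Γ(1+2k/β)·Γ(1-2/β)^k)`. -/
theorem statement10 (β : ℝ) (hβ : 2 < β) (k : ℕ) (hk : 1 ≤ k)
    (γ τ : ℝ) (hγ : 0 < γ) (hτ : 0 < τ) :
    (∫ z in {z : Fin k → ℝ | (∀ i, 0 < z i) ∧ (∀ i j : Fin k, i < j → z j < z i) ∧
        γ * ∑ j, z j < 1 ∧
        τ/(1+γ*τ) < γ * (τ/(1+γ*τ)) *
            (∑ i ∈ Finset.univ.erase (⟨k-1, by omega⟩ : Fin k), z i) +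
          z ⟨k-1, by omega⟩},
      cConst k β * γ^k * (∏ i, (γ * z i) ^ (-(2/β + 1))) *
        (1 - γ * ∑ j, z j) ^ (2*(k:ℝ)/β - 1)) =
    1 / ((γ*τ) ^ (2*(k:ℝ)/β) * Real.Gamma (1 + 2*(k:ℝ)/β) * (Real.Gamma (1 - 2/β))^k) := by
  obtain ⟨n, rfl⟩ : ∃ n, k = n + 1 := ⟨k - 1, by omega⟩
  have ha : 0 < γ * τ := mul_pos hγ hτ
  have hT := measurableSet_orderedAbove n (γ * τ)
  have hpos : ∀ y ∈ orderedAbove n (γ * τ), ∀ i, 0 < y i := fun y hy i =>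
    ha.trans (lt_of_mem_orderedAbove hy i)
  have hP : ∀ y ∈ orderedAbove n (γ * τ), 0 < 1 + ∑ j, y j := fun y hy => by
    linarith [sum_nonneg fun i (_ : i ∈ univ) => (hpos y hy i).le]
  rw [show (⟨n + 1 - 1, by omega⟩ : Fin (n + 1)) = Fin.last n from rfl,
    coverageRegion_eq_image hγ hτ, integral_image_eq_integral_abs_det_fderiv_smul volume hT
    (fun y hy => (hasFDerivAt_projMap (mul_pos hγ (hP y hy)).ne').hasFDerivWithinAt)
    (Set.LeftInvOn.injOn fun y hy => projMapInv_projMap hγ.ne' (hP y hy).ne'),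
    show 2 * ((n + 1 : ℕ) : ℝ) / β - 1 = ((n + 1 : ℕ) : ℝ) * (2 / β) - 1 by ring]
  rw [setIntegral_congr_fun hT fun y hy => by
      simpa only [Fintype.card_fin, smul_eq_mul] using
        abs_det_projMapFDeriv_mul hγ (fun i => (hpos y hy i).le) (cConst (n + 1) β) (2 / β),
    integral_const_mul,
    setIntegral_orderedAbove_prod_rpow (by positivity) ha n]
  exact cConst_succ_mul hβ n ha
end
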